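/- arXiv:1903.11274 — 4 statements merged into one kernel-verified Lean document; each statement's English description precedes it below -/
import Mathlib

section
/- There exists a constant K > 0, depending only on a, b, C and q₀, such that q(τ) ≤ K e^{−min(a,b)τ/2} for all τ ≥ 0. -/
open Real Set Filter intervalIntegral

/-!
Write `Q τ = 1 + ∫₀^τ q`, so that `Q' = q` and the hypothesis reads
`q' + a q ≤ C e^{-bτ} (q + Q)`. With `ε = min a 1`, the function `z = q + ε Q` satisfies
`z' ≤ (C/ε) e^{-bτ} z`, and since `∫₀^∞ e^{-bτ} dτ < ∞` Grönwall's inequality bounds `z`, hence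
`q + Q ≤ M`. Then `q' + μ q ≤ C M e^{-bτ}` for `μ = min a b / 2 < b`, and the integrating factor
`e^{μτ}` gives `q τ ≤ (q 0 + C M / (b - μ)) e^{-μτ}`.
-/

theorem antitoneOn_Ici_of_hasDerivAt_nonpos {a : ℝ} {f f' : ℝ → ℝ} (hf : ContinuousOn f (Ici a))
    (hf' : ∀ x > a, HasDerivAt f (f' x) x) (hf'₀ : ∀ x > a, f' x ≤ 0) :
    AntitoneOn f (Ici a) := by
  refine antitoneOn_of_hasDerivWithinAt_nonpos (f' := f') (convex_Ici a) hf ?_ ?_ <;>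
    rw [interior_Ici]
  · exact fun x hx => (hf' x hx).hasDerivWithinAt
  · exact hf'₀

theorem le_mul_exp_sub_of_hasDerivAt_le_mul {f f' g g' : ℝ → ℝ} (hf : ContinuousOn f (Ici 0))
    (hf' : ∀ x > 0, HasDerivAt f (f' x) x) (hg : ∀ x, HasDerivAt g (g' x) x)
    (hle : ∀ x > 0, f' x ≤ g' x * f x) {τ : ℝ} (hτ : 0 ≤ τ) :
    f τ ≤ f 0 * exp (g τ - g 0) := by
  have hanti : AntitoneOn (fun x => f x * exp (-g x)) (Ici 0) := by
    refine antitoneOn_Ici_of_hasDerivAt_nonpos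
      (f' := fun x => (f' x - g' x * f x) * exp (-g x)) ?_ (fun x hx => ?_) (fun x hx => ?_)
    · have hgc : Continuous g := continuous_iff_continuousAt.2 fun x => (hg x).continuousAt
      exact hf.mul hgc.neg.rexp.continuousOn
    · exact ((hf' x hx).fun_mul (hg x).fun_neg.exp).congr_deriv (by ring)
    · exact mul_nonpos_of_nonpos_of_nonneg (sub_nonpos.2 (hle x hx)) (exp_pos _).le
  calc f τ = f τ * exp (-g τ) * exp (g τ) := by rw [mul_assoc, ← exp_add]; simp
    _ ≤ f 0 * exp (-g 0) * exp (g τ) :=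
      mul_le_mul_of_nonneg_right (hanti self_mem_Ici hτ hτ) (exp_pos _).le
    _ = f 0 * exp (g τ - g 0) := by rw [mul_assoc, ← exp_add]; ring_nf

theorem le_mul_exp_of_hasDerivAt_add_mul_le {f f' : ℝ → ℝ} {μ b D : ℝ} (hμb : μ < b)
    (hD : 0 ≤ D) (hf : ContinuousOn f (Ici 0)) (hf' : ∀ x > 0, HasDerivAt f (f' x) x)
    (hle : ∀ x > 0, f' x + μ * f x ≤ D * exp (-b * x)) {τ : ℝ} (hτ : 0 ≤ τ) :
    f τ ≤ (f 0 + D / (b - μ)) * exp (-μ * τ) := by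
  have hbμ : b - μ ≠ 0 := (sub_pos.2 hμb).ne'
  set w : ℝ → ℝ := fun x => exp (μ * x) * (f x + D / (b - μ) * exp (-b * x))
  have hanti : AntitoneOn w (Ici 0) := by
    refine antitoneOn_Ici_of_hasDerivAt_nonpos
      (f' := fun x => exp (μ * x) * (f' x + μ * f x - D * exp (-b * x))) ?_ (fun x hx => ?_)
      (fun x hx => ?_)
    · exact (continuous_const.mul continuous_id).rexp.continuousOn.mul
        (hf.add (continuous_const.mul (continuous_const.mul continuous_id).rexp).continuousOn)
    · have hexp (c : ℝ) : HasDerivAt (fun y => exp (c * y)) (exp (c * x) * c) x := by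
        simpa using ((hasDerivAt_id' x).const_mul c).exp
      refine ((hexp μ).fun_mul ((hf' x hx).fun_add ((hexp (-b)).const_mul _))).congr_deriv ?_
      field_simp
      ring
    · exact mul_nonpos_of_nonneg_of_nonpos (exp_pos _).le (sub_nonpos.2 (hle x hx))
  have hw : w τ ≤ w 0 := hanti self_mem_Ici hτ hτ
  have hrest : 0 ≤ D / (b - μ) * exp (-b * τ) := by
    have := sub_pos.2 hμb
    positivity
  simp only [w, mul_zero, exp_zero, one_mul, mul_one] at hw
  rw [neg_mul, exp_neg, ← div_eq_mul_inv, le_div_iff₀ (exp_pos _)]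
  nlinarith [exp_pos (μ * τ)]

section Primitive

variable {a : ℝ} {q : ℝ → ℝ}

theorem hasDerivAt_integral_of_continuousOn_Ici (hq : ContinuousOn q (Ici a)) {x : ℝ}
    (hx : a < x) : HasDerivAt (fun τ => ∫ σ in a..τ, q σ) (q x) x := by
  have hint : IntervalIntegrable q MeasureTheory.volume a x :=
    ContinuousOn.intervalIntegrable_of_Icc hx.le (hq.mono Icc_subset_Ici_self)
  have hmeas : StronglyMeasurableAtFilter q (nhds x) MeasureTheory.volume :=
    ContinuousOn.stronglyMeasurableAtFilter isOpen_Ioi (hq.mono Ioi_subset_Ici_self) x hx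
  exact integral_hasDerivAt_right hint hmeas (hq.continuousAt (Ici_mem_nhds hx))

theorem continuousOn_integral_of_continuousOn_Ici (hq : ContinuousOn q (Ici a)) :
    ContinuousOn (fun τ => ∫ σ in a..τ, q σ) (Ici a) := by
  intro x hx
  have hax : a ≤ x + 1 := by linarith [mem_Ici.1 hx]
  have hint : MeasureTheory.IntegrableOn q (uIcc a (x + 1)) MeasureTheory.volume := by
    rw [uIcc_of_le hax]
    exact (hq.mono Icc_subset_Ici_self).integrableOn_Icc
  have hcont := continuousOn_primitive_interval hint
  rw [uIcc_of_le hax] at hcont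
  refine (hcont x ⟨hx, by linarith⟩).mono_of_mem_nhdsWithin ?_
  exact mem_nhdsWithin.2 ⟨Iio (x + 1), isOpen_Iio, by simp, fun y hy => ⟨hy.2, hy.1.le⟩⟩

end Primitive

theorem exists_add_le_of_hasDerivAt_add_mul_le {a b C : ℝ} {q q' Q : ℝ → ℝ} (ha : 0 < a)
    (hb : 0 < b) (hC : 0 ≤ C) (hqc : ContinuousOn q (Ici 0)) (hQc : ContinuousOn Q (Ici 0))
    (hq' : ∀ x > 0, HasDerivAt q (q' x) x) (hQ' : ∀ x > 0, HasDerivAt Q (q x) x)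
    (hq : ∀ x ≥ 0, 0 ≤ q x) (hQ₀ : 0 ≤ Q 0)
    (hle : ∀ x > 0, q' x + a * q x ≤ C * exp (-b * x) * (q x + Q x)) :
    ∃ M, ∀ x ≥ 0, q x + Q x ≤ M := by
  set ε := min a 1
  have hε : 0 < ε := lt_min ha one_pos
  have hεq : ∀ x ≥ 0, q x + Q x ≤ (q x + ε * Q x) / ε := fun x hx => by
    rw [le_div_iff₀ hε]
    nlinarith [hq x hx, min_le_right a 1]
  set g : ℝ → ℝ := fun x => -(C / (ε * b)) * exp (-b * x)
  have hg (x : ℝ) : HasDerivAt g (C / ε * exp (-b * x)) x := by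
    refine (((hasDerivAt_id' x).const_mul (-b)).exp.const_mul _).congr_deriv ?_
    field_simp
  have hz (τ : ℝ) (hτ : 0 ≤ τ) :
      q τ + ε * Q τ ≤ (q 0 + ε * Q 0) * exp (g τ - g 0) := by
    refine le_mul_exp_sub_of_hasDerivAt_le_mul (hqc.add (hQc.const_smul ε))
      (fun x hx => (hq' x hx).add ((hQ' x hx).const_mul ε)) hg (fun x hx => ?_) hτ
    calc q' x + ε * q x ≤ q' x + a * q x := by
          nlinarith [hq x hx.le, min_le_left a 1]
      _ ≤ C * exp (-b * x) * (q x + Q x) := hle x hx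
      _ ≤ C * exp (-b * x) * ((q x + ε * Q x) / ε) := by gcongr; exact hεq x hx.le
      _ = C / ε * exp (-b * x) * (q x + ε * Q x) := by ring
  have hg_sub (τ : ℝ) : g τ - g 0 ≤ C / (ε * b) := by
    have : 0 ≤ C / (ε * b) * exp (-b * τ) := by positivity
    simp only [g, mul_zero, exp_zero]
    linarith
  refine ⟨(q 0 + ε * Q 0) * exp (C / (ε * b)) / ε, fun τ hτ => (hεq τ hτ).trans ?_⟩
  have hz₀ : 0 ≤ q 0 + ε * Q 0 := by nlinarith [hq 0 le_rfl]
  gcongr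
  exact (hz τ hτ).trans (by gcongr; exact hg_sub τ)

theorem stmt_9_general
    (a b C : ℝ) (ha : 0 < a) (hb : 0 < b) (hC : 0 < C)
    (q q' : ℝ → ℝ)
    (hqc : ContinuousOn q (Set.Ici 0))
    (hderiv : ∀ τ > (0:ℝ), HasDerivAt q (q' τ) τ)
    (hqpos : ∀ τ ≥ (0:ℝ), 0 < q τ)
    (hineq : ∀ τ > (0:ℝ), q' τ + (a - C * Real.exp (-b * τ)) * q τ ≤
      C * Real.exp (-b * τ) * (1 + ∫ σ in (0:ℝ)..τ, q σ))
    :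
    ∃ K > (0:ℝ), ∀ τ ≥ (0:ℝ), q τ ≤ K * Real.exp (-(min a b) / 2 * τ) := by
  set Q : ℝ → ℝ := fun τ => 1 + ∫ σ in (0:ℝ)..τ, q σ
  have hQc : ContinuousOn Q (Ici 0) :=
    continuousOn_const.add (continuousOn_integral_of_continuousOn_Ici hqc)
  have hQ' (x : ℝ) (hx : 0 < x) : HasDerivAt Q (q x) x :=
    (hasDerivAt_integral_of_continuousOn_Ici hqc hx).const_add 1
  have hle (x : ℝ) (hx : 0 < x) : q' x + a * q x ≤ C * exp (-b * x) * (q x + Q x) := by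
    linear_combination hineq x hx
  have hQ₀ : Q 0 = 1 := by simp [Q]
  obtain ⟨M, hM⟩ := exists_add_le_of_hasDerivAt_add_mul_le ha hb hC.le hqc hQc hderiv hQ'
    (fun x hx => (hqpos x hx).le) (by simp [hQ₀]) hle
  set μ := min a b / 2 with hμ
  have hμb : μ < b := by linarith [min_le_right a b, lt_min ha hb, hμ]
  have hM₀ : 0 ≤ M := by linarith [hM 0 le_rfl, hqpos 0 le_rfl, hQ₀]
  have hdecay (x : ℝ) (hx : 0 < x) : q' x + μ * q x ≤ C * M * exp (-b * x) := by
    have hμa : μ ≤ a := by linarith [min_le_left a b, lt_min ha hb, hμ]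
    calc q' x + μ * q x ≤ q' x + a * q x := by gcongr; exact (hqpos x hx.le).le
      _ ≤ C * exp (-b * x) * (q x + Q x) := hle x hx
      _ ≤ C * exp (-b * x) * M := by gcongr; exact hM x hx.le
      _ = C * M * exp (-b * x) := by ring
  refine ⟨q 0 + C * M / (b - μ), ?_, fun τ hτ => ?_⟩
  · have := sub_pos.2 hμb
    have := hqpos 0 le_rfl
    positivity
  · convert le_mul_exp_of_hasDerivAt_add_mul_le hμb (by positivity) hqc hderiv hdecay hτ
      using 3
    ring

theorem stmt_9
    (a b C q₀ : ℝ) (ha : 0 < a) (hb : 0 < b) (hC : 0 < C) (hq₀ : 0 < q₀)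
    (q q' : ℝ → ℝ) (hq0 : q 0 = q₀)
    (hqc : ContinuousOn q (Set.Ici 0))
    (hq'c : ContinuousOn q' (Set.Ici 0))
    (hderiv : ∀ τ > (0:ℝ), HasDerivAt q (q' τ) τ)
    (hqpos : ∀ τ ≥ (0:ℝ), 0 < q τ)
    (hineq : ∀ τ > (0:ℝ), q' τ + (a - C * Real.exp (-b * τ)) * q τ ≤
      C * Real.exp (-b * τ) * (1 + ∫ σ in (0:ℝ)..τ, q σ))
    :
    ∃ K > (0:ℝ), ∀ τ ≥ (0:ℝ), q τ ≤ K * Real.exp (-(min a b) / 2 * τ) :=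
  stmt_9_general a b C ha hb hC q q' hqc hderiv hqpos hineq
end

section
/- There exists Λ > 0, depending only on C and q₀, such that q(τ) ≤ 2 q₀ e^{Λτ} for all τ ≥ 0. -/
/-!
With `F(τ) = ∫₀^τ q`, the comparison function `Q = q + q₀ (1 + F)` satisfies `Q(0) = 2 q₀` and,
since `e^{-bτ} ≤ 1` and `a q ≥ 0`, the differential inequality
`Q' = q' + q₀ q ≤ (C + q₀) q + (C / q₀) q₀ (1 + F) ≤ Λ Q` with `Λ = C + q₀ + C / q₀`.
Grönwall's argument (`e^{-Λτ} Q` is antitone) gives `q ≤ Q ≤ 2 q₀ e^{Λτ}`.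
-/

open Real Set Filter intervalIntegral

theorem le_mul_exp_of_hasDerivAt_le_mul {f f' : ℝ → ℝ} {K a : ℝ}
    (hf : ContinuousOn f (Ici a)) (hf' : ∀ x ∈ Ioi a, HasDerivAt f (f' x) x)
    (bound : ∀ x ∈ Ioi a, f' x ≤ K * f x) :
    ∀ x ∈ Ici a, f x ≤ f a * exp (K * (x - a)) := by
  have hanti : AntitoneOn (fun x => exp (-(K * x)) * f x) (Ici a) := by
    refine antitoneOn_of_hasDerivWithinAt_nonpos (convex_Ici a)
      ((continuous_const.mul continuous_id).neg.rexp.continuousOn.mul hf)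
      (f' := fun x => exp (-(K * x)) * (f' x - K * f x)) (fun x hx => ?_) (fun x hx => ?_)
    · rw [interior_Ici] at hx
      have hexp : HasDerivAt (fun x => exp (-(K * x))) (exp (-(K * x)) * -(K * 1)) x :=
        ((hasDerivAt_id x).const_mul K).neg.exp
      exact (hexp.mul (hf' x hx)).hasDerivWithinAt.congr_deriv (by ring)
    · rw [interior_Ici] at hx
      exact mul_nonpos_of_nonneg_of_nonpos (exp_pos _).le (sub_nonpos.2 (bound x hx))
  intro x hx
  have key := hanti self_mem_Ici hx hx
  calc f x = exp (K * x) * (exp (-(K * x)) * f x) := by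
        rw [← mul_assoc, ← exp_add, add_neg_cancel, exp_zero, one_mul]
    _ ≤ exp (K * x) * (exp (-(K * a)) * f a) := by gcongr
    _ = f a * exp (K * (x - a)) := by
        rw [mul_sub, sub_eq_add_neg, exp_add]; ring

theorem continuousOn_primitive_Ici {f : ℝ → ℝ} {a : ℝ} (hf : ContinuousOn f (Ici a)) :
    ContinuousOn (fun x => ∫ t in a..x, f t) (Ici a) := by
  intro x hx
  have hax : a ≤ x + 1 := by linarith [mem_Ici.1 hx]
  have hcont := continuousOn_primitive_interval (μ := MeasureTheory.volume) (f := f) (a := a)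
    (b := x + 1) (by rw [uIcc_of_le hax]; exact (hf.mono Icc_subset_Ici_self).integrableOn_Icc)
  rw [uIcc_of_le hax] at hcont
  refine (hcont x ⟨hx, by linarith⟩).mono_of_mem_nhdsWithin ?_
  rw [← Ici_inter_Iic]
  exact inter_mem_nhdsWithin _ (Iic_mem_nhds (by linarith))

theorem hasDerivAt_primitive_of_continuousOn_Ici {f : ℝ → ℝ} {a x : ℝ}
    (hf : ContinuousOn f (Ici a)) (hx : a < x) :
    HasDerivAt (fun x => ∫ t in a..x, f t) (f x) x :=
  integral_hasDerivAt_right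
    ((hf.mono (uIcc_of_le hx.le ▸ Icc_subset_Ici_self)).intervalIntegrable)
    ((hf.mono Ioi_subset_Ici_self).stronglyMeasurableAtFilter isOpen_Ioi x hx)
    (hf.continuousAt (Ici_mem_nhds hx))

noncomputable def growthRate (C q₀ : ℝ) : ℝ := C + q₀ + C / q₀

theorem add_mul_le_growthRate_mul {a b C q₀ x q q' I : ℝ} (ha : 0 ≤ a) (hb : 0 ≤ b)
    (hC : 0 ≤ C) (hq₀ : 0 < q₀) (hx : 0 ≤ x) (hq : 0 ≤ q) (hI : 0 ≤ I)
    (h : q' + (a - C * exp (-b * x)) * q ≤ C * exp (-b * x) * (1 + I)) :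
    q' + q₀ * q ≤ growthRate C q₀ * (q + q₀ * (1 + I)) := by
  have hdecay : C * exp (-b * x) ≤ C :=
    mul_le_of_le_one_right hC (exp_le_one_iff.2 (by nlinarith))
  have hq' : q' ≤ C * q + C * (1 + I) := by
    nlinarith [mul_le_mul_of_nonneg_right hdecay hq, mul_nonneg ha hq]
  have hsplit : C * (1 + I) = C / q₀ * (q₀ * (1 + I)) := by field_simp
  unfold growthRate
  nlinarith [mul_nonneg (div_nonneg hC hq₀.le) hq, mul_nonneg (add_nonneg hC hq₀.le) hq₀.le,
    mul_nonneg (mul_nonneg (add_nonneg hC hq₀.le) hq₀.le) hI]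

theorem stmt_10_general
    (a b C q₀ : ℝ) (ha : 0 < a) (hb : 0 < b) (hC : 0 < C) (hq₀ : 0 < q₀)
    (q q' : ℝ → ℝ) (hq0 : q 0 = q₀)
    (hqc : ContinuousOn q (Set.Ici 0))
    (hderiv : ∀ τ > (0:ℝ), HasDerivAt q (q' τ) τ)
    (hqpos : ∀ τ ≥ (0:ℝ), 0 < q τ)
    (hineq : ∀ τ > (0:ℝ), q' τ + (a - C * Real.exp (-b * τ)) * q τ ≤
      C * Real.exp (-b * τ) * (1 + ∫ σ in (0:ℝ)..τ, q σ))
    :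
    ∃ Λ > (0:ℝ), ∀ τ ≥ (0:ℝ), q τ ≤ 2 * q₀ * Real.exp (Λ * τ) := by
  set F := fun t => ∫ σ in (0:ℝ)..t, q σ
  have hF_nonneg : ∀ t ≥ (0:ℝ), 0 ≤ F t := fun t ht =>
    integral_nonneg ht fun u hu => (hqpos u hu.1).le
  have hgronwall := le_mul_exp_of_hasDerivAt_le_mul (a := 0) (K := growthRate C q₀)
    (f := fun t => q t + q₀ * (1 + F t)) (f' := fun t => q' t + q₀ * q t)
    (hqc.add (continuousOn_const.mul (continuousOn_const.add (continuousOn_primitive_Ici hqc))))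
    (fun x hx => (hderiv x hx).add
      (((hasDerivAt_primitive_of_continuousOn_Ici hqc hx).const_add 1).const_mul q₀))
    (fun x hx => add_mul_le_growthRate_mul ha.le hb.le hC.le hq₀ (le_of_lt hx)
      (hqpos x (le_of_lt hx)).le (hF_nonneg x (le_of_lt hx)) (hineq x hx))
  refine ⟨growthRate C q₀, by unfold growthRate; positivity, fun τ hτ => ?_⟩
  have hQτ := hgronwall τ hτ
  simp only [F, integral_same, hq0, sub_zero] at hQτ
  nlinarith [hF_nonneg τ hτ]

theorem stmt_10
    (a b C q₀ : ℝ) (ha : 0 < a) (hb : 0 < b) (hC : 0 < C) (hq₀ : 0 < q₀)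
    (q q' : ℝ → ℝ) (hq0 : q 0 = q₀)
    (hqc : ContinuousOn q (Set.Ici 0))
    (hq'c : ContinuousOn q' (Set.Ici 0))
    (hderiv : ∀ τ > (0:ℝ), HasDerivAt q (q' τ) τ)
    (hqpos : ∀ τ ≥ (0:ℝ), 0 < q τ)
    (hineq : ∀ τ > (0:ℝ), q' τ + (a - C * Real.exp (-b * τ)) * q τ ≤
      C * Real.exp (-b * τ) * (1 + ∫ σ in (0:ℝ)..τ, q σ))
    :
    ∃ Λ > (0:ℝ), ∀ τ ≥ (0:ℝ), q τ ≤ 2 * q₀ * Real.exp (Λ * τ) :=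
  stmt_10_general a b C q₀ ha hb hC hq₀ q q' hq0 hqc hderiv hqpos hineq
end

section
/- The system q'(τ) = −q(τ) + C ζ(τ) e^{−βτ}, ζ'(τ) = C (q(τ) + ζ(τ) e^{−βτ}), with q(0) = q₀ and ζ(0) = ζ₀, has a unique solution (q, ζ) defined on all of [0,∞); moreover q(τ) > 0 and ζ(τ) > 0 for all τ ≥ 0, ζ is nondecreasing and bounded above, and there exist constants K > 0 and μ > 0 such that q(τ) ≤ K e^{−μτ} for all τ ≥ 0. -/
/-!
The system is linear with bounded continuous coefficients, so Picard–Lindelöf steps of a uniform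
length glue to a solution on all of `[0, ∞)`, and Grönwall gives uniqueness. Positivity propagates
by a first-exit argument: while both components are positive, `ζ` is nondecreasing and
`(q e^τ)' = C ζ e^{(1-β)τ} > 0`. Once `q > 0`, `V = ζ + C q` satisfies
`V' = C (1 + C) e^{-βτ} ζ ≤ C (1 + C) e^{-βτ} V`, and `∫₀^∞ e^{-βτ} < ∞` bounds `V`, hence `ζ`.
Finally `(q e^τ)' ≤ C M e^{(1-β)τ}` integrates to `q ≤ K e^{-βτ}`.
-/

open Real Set Filter
open scoped NNReal

theorem forall_nonneg_mem_of_isOpen {X : Type*} [TopologicalSpace X] {γ : ℝ → X} {U : Set X}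
    (hU : IsOpen U) (hγ : ContinuousOn γ (Ici 0)) (h0 : γ 0 ∈ U)
    (hstep : ∀ T > 0, (∀ s ∈ Ico 0 T, γ s ∈ U) → γ T ∈ U) : ∀ t ≥ 0, γ t ∈ U := by
  by_contra! hbad
  set B := Ici 0 ∩ γ ⁻¹' Uᶜ
  have hB : IsClosed B := hγ.preimage_isClosed_of_isClosed isClosed_Ici hU.isClosed_compl
  have hBne : B.Nonempty := let ⟨t, ht, hγt⟩ := hbad; ⟨t, ht, hγt⟩
  have hbdd : BddBelow B := ⟨0, fun _ hb => hb.1⟩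
  obtain ⟨hT0, hTU⟩ := hB.csInf_mem hBne hbdd
  have hT : 0 < sInf B := hT0.lt_of_ne fun h => hTU (h ▸ h0)
  exact hTU <| hstep _ hT fun s hs => not_not.1 fun hsU => notMem_of_lt_csInf hs.2 hbdd ⟨hs.1, hsU⟩

theorem monotoneOn_of_hasDerivAt_nonneg {D : Set ℝ} (hD : Convex ℝ D) {f f' : ℝ → ℝ}
    (hf : ∀ t ∈ D, HasDerivAt f (f' t) t) (hf' : ∀ t ∈ interior D, 0 ≤ f' t) :
    MonotoneOn f D :=
  monotoneOn_of_hasDerivWithinAt_nonneg hD (fun t ht => (hf t ht).continuousAt.continuousWithinAt)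
    (fun t ht => (hf t (interior_subset ht)).hasDerivWithinAt) hf'

theorem antitoneOn_of_hasDerivAt_nonpos {D : Set ℝ} (hD : Convex ℝ D) {f f' : ℝ → ℝ}
    (hf : ∀ t ∈ D, HasDerivAt f (f' t) t) (hf' : ∀ t ∈ interior D, f' t ≤ 0) :
    AntitoneOn f D :=
  antitoneOn_of_hasDerivWithinAt_nonpos hD (fun t ht => (hf t ht).continuousAt.continuousWithinAt)
    (fun t ht => (hf t (interior_subset ht)).hasDerivWithinAt) hf'

section

variable {E : Type*} [NormedAddCommGroup E] [NormedSpace ℝ E]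

theorem exists_forall_mem_Icc_hasDerivWithinAt_glue {v : ℝ → E → E} {f₁ f₂ : ℝ → E}
    {a c d : ℝ} (hac : a ≤ c) (hcd : c ≤ d)
    (h₁ : ∀ t ∈ Icc a c, HasDerivWithinAt f₁ (v t (f₁ t)) (Icc a c) t)
    (h₂ : ∀ t ∈ Icc c d, HasDerivWithinAt f₂ (v t (f₂ t)) (Icc c d) t)
    (heq : f₂ c = f₁ c) :
    ∃ f : ℝ → E, EqOn f f₁ (Icc a c) ∧
      ∀ t ∈ Icc a d, HasDerivWithinAt f (v t (f t)) (Icc a d) t := by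
  set f : ℝ → E := fun t => if t ≤ c then f₁ t else f₂ t
  have hf₁ : EqOn f f₁ (Icc a c) := fun t ht => if_pos ht.2
  have hf₂ : EqOn f f₂ (Icc c d) := by
    intro t ht
    rcases ht.1.eq_or_lt with rfl | hct
    · exact (if_pos le_rfl).trans heq.symm
    · exact if_neg (not_le.2 hct)
  refine ⟨f, hf₁, fun t _ => ?_⟩
  have H₁ : HasDerivWithinAt f (v t (f t)) (Icc a c) t := by
    by_cases ht : t ∈ Icc a c
    · rw [hf₁ ht]; exact (h₁ t ht).congr_of_mem hf₁ ht
    · exact HasFDerivWithinAt.of_notMem_closure (by rwa [closure_Icc])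
  have H₂ : HasDerivWithinAt f (v t (f t)) (Icc c d) t := by
    by_cases ht : t ∈ Icc c d
    · rw [hf₂ ht]; exact (h₂ t ht).congr_of_mem hf₂ ht
    · exact HasFDerivWithinAt.of_notMem_closure (by rwa [closure_Icc])
  simpa only [Icc_union_Icc_eq_Icc hac hcd] using H₁.union H₂

namespace LinearODE

variable {A : ℝ → E →L[ℝ] E} {K : ℝ≥0}

theorem exists_eq_forall_mem_Icc_hasDerivWithinAt [CompleteSpace E]
    (hA : ∀ x, Continuous fun t => A t x) (hK : ∀ t, ‖A t‖₊ ≤ K) {h : ℝ} (hh : 0 ≤ h)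
    (hKh : 2 * K * h ≤ 1) (a : ℝ) (y : E) :
    ∃ f : ℝ → E, f a = y ∧ ∀ t ∈ Icc (a - h) (a + h),
      HasDerivWithinAt f (A t (f t)) (Icc (a - h) (a + h)) t := by
  have hpl : IsPicardLindelof (fun t x => A t x) (tmin := a - h) (tmax := a + h)
      ⟨a, by constructor <;> linarith⟩ y (‖y‖₊ + 1) 0 (K * (2 * ‖y‖₊ + 1)) K := by
    refine ⟨fun t _ => ((A t).lipschitz.weaken (hK t)).lipschitzOnWith,
      fun x _ => (hA x).continuousOn, fun t _ x hx => ?_, ?_⟩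
    · have hx : ‖x‖ ≤ 2 * ‖y‖ + 1 := by
        rw [Metric.mem_closedBall, dist_eq_norm] at hx
        push_cast at hx
        linarith [norm_le_norm_add_norm_sub' x y]
      push_cast
      calc ‖A t x‖ ≤ ‖A t‖ * ‖x‖ := (A t).le_opNorm x
        _ ≤ K * (2 * ‖y‖ + 1) := mul_le_mul (hK t) hx (norm_nonneg _) K.2
    · simp only [add_sub_cancel_left, sub_sub_cancel, max_self]
      push_cast
      nlinarith [norm_nonneg y]
  exact hpl.exists_eq_forall_mem_Icc_hasDerivWithinAt₀

theorem exists_eq_forall_mem_Icc_nat_mul_hasDerivWithinAt [CompleteSpace E]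
    (hA : ∀ x, Continuous fun t => A t x) (hK : ∀ t, ‖A t‖₊ ≤ K) {h : ℝ} (hh : 0 ≤ h)
    (hKh : 2 * K * h ≤ 1) (x₀ : E) (n : ℕ) :
    ∃ f : ℝ → E, f 0 = x₀ ∧ ∀ t ∈ Icc (-h) (n * h),
      HasDerivWithinAt f (A t (f t)) (Icc (-h) (n * h)) t := by
  induction n with
  | zero =>
    obtain ⟨f, hf0, hf⟩ := exists_eq_forall_mem_Icc_hasDerivWithinAt hA hK hh hKh 0 x₀
    have hsub : Icc (-h) ((0 : ℕ) * h) ⊆ Icc (0 - h) (0 + h) :=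
      Icc_subset_Icc (by simp) (by simp [hh])
    exact ⟨f, hf0, fun t ht => (hf t (hsub ht)).mono hsub⟩
  | succ n ih =>
    obtain ⟨f, hf0, hf⟩ := ih
    obtain ⟨g, hg0, hg⟩ :=
      exists_eq_forall_mem_Icc_hasDerivWithinAt hA hK hh hKh (n * h) (f (n * h))
    have hsub : Icc (n * h) ((n + 1 : ℕ) * h) ⊆ Icc (n * h - h) (n * h + h) :=
      Icc_subset_Icc (by linarith) (by push_cast; linarith)
    have hnh : 0 ≤ n * h := by positivity
    obtain ⟨F, hFf, hF⟩ := exists_forall_mem_Icc_hasDerivWithinAt_glue (by linarith)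
      (by push_cast; linarith) hf (fun t ht => (hg t (hsub ht)).mono hsub) hg0
    exact ⟨F, (hFf ⟨by linarith, hnh⟩).trans hf0, hF⟩

theorem exists_eq_forall_mem_Ioo_hasDerivAt [CompleteSpace E]
    (hA : ∀ x, Continuous fun t => A t x) (hK : ∀ t, ‖A t‖₊ ≤ K) {h : ℝ} (hh : 0 < h)
    (hKh : 2 * K * h ≤ 1) (x₀ : E) (T : ℝ) :
    ∃ f : ℝ → E, f 0 = x₀ ∧ ∀ t ∈ Ioo (-h) T, HasDerivAt f (A t (f t)) t := by
  obtain ⟨n, hn⟩ := exists_nat_ge (T / h)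
  obtain ⟨f, hf0, hf⟩ :=
    exists_eq_forall_mem_Icc_nat_mul_hasDerivWithinAt hA hK hh.le hKh x₀ n
  have hTn : T ≤ n * h := (div_le_iff₀ hh).1 hn
  exact ⟨f, hf0, fun t ht => (hf t ⟨ht.1.le, ht.2.le.trans hTn⟩).hasDerivAt
    (Icc_mem_nhds ht.1 (ht.2.trans_le hTn))⟩

theorem exists_eq_forall_nonneg_hasDerivAt [CompleteSpace E]
    (hA : ∀ x, Continuous fun t => A t x) (hK : ∀ t, ‖A t‖₊ ≤ K) (x₀ : E) :
    ∃ f : ℝ → E, f 0 = x₀ ∧ ∀ t ≥ 0, HasDerivAt f (A t (f t)) t := by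
  set h : ℝ := (2 * K + 1)⁻¹
  have hh : 0 < h := by positivity
  have hKh : 2 * K * h ≤ 1 := by
    rw [mul_inv_le_iff₀ (by positivity)]
    linarith
  choose G hG0 hG using exists_eq_forall_mem_Ioo_hasDerivAt hA hK hh hKh x₀
  have hGG : ∀ {T T' s : ℝ}, 0 < T → 0 < T' → s ∈ Ioo (-h) T → s ∈ Ioo (-h) T' →
      G T s = G T' s := by
    intro T T' s hT hT' hs hs'
    refine ODE_solution_unique_of_mem_Ioo (v := fun t x => A t x) (s := fun _ => univ)
      (fun t _ => ((A t).lipschitz.weaken (hK t)).lipschitzOnWith)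
      ⟨neg_lt_zero.2 hh, lt_min hT hT'⟩
      (fun t ht => ⟨hG T t ⟨ht.1, ht.2.trans_le (min_le_left _ _)⟩, trivial⟩)
      (fun t ht => ⟨hG T' t ⟨ht.1, ht.2.trans_le (min_le_right _ _)⟩, trivial⟩)
      ((hG0 T).trans (hG0 T').symm) ⟨hs.1, lt_min hs.2 hs'.2⟩
  have hmem : ∀ s, -h < s → s ∈ Ioo (-h) (|s| + 1) := fun s hs =>
    ⟨hs, (le_abs_self s).trans_lt (lt_add_one _)⟩
  refine ⟨fun t => G (|t| + 1) t, hG0 _, fun t ht => ?_⟩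
  have ht' := hmem t (by linarith)
  exact (hG _ t ht').congr_of_eventuallyEq <| eventually_of_mem (Ioo_mem_nhds ht'.1 ht'.2)
    fun s hs => hGG (by positivity) (by positivity) (hmem s hs.1) hs

theorem eqOn_Ici_of_hasDerivAt (hK : ∀ t, ‖A t‖₊ ≤ K) {f g : ℝ → E}
    (hf : ∀ t ≥ 0, HasDerivAt f (A t (f t)) t) (hg : ∀ t ≥ 0, HasDerivAt g (A t (g t)) t)
    (h0 : f 0 = g 0) : EqOn f g (Ici 0) := fun _ ht =>
  ODE_solution_unique (v := fun t x => A t x) (fun t => (A t).lipschitz.weaken (hK t))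
    (HasDerivAt.continuousOn fun s hs => hf s hs.1) (fun s hs => (hf s hs.1).hasDerivWithinAt)
    (HasDerivAt.continuousOn fun s hs => hg s hs.1) (fun s hs => (hg s hs.1).hasDerivWithinAt)
    h0 ⟨ht, le_rfl⟩

end LinearODE

namespace CoupledSystem

variable {C β : ℝ} {q ζ : ℝ → ℝ}

def IsSolution (C β : ℝ) (q ζ : ℝ → ℝ) : Prop :=
  ∀ τ ≥ (0 : ℝ), HasDerivAt q (-q τ + C * ζ τ * exp (-β * τ)) τ ∧
    HasDerivAt ζ (C * (q τ + ζ τ * exp (-β * τ))) τ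

/-- For `t < 0` the coefficient `exp (-β * t)` is frozen at its value `1` at `t = 0`, which keeps
the field bounded. -/
noncomputable def vectorField (C β t : ℝ) : ℝ × ℝ →L[ℝ] ℝ × ℝ :=
  (-ContinuousLinearMap.fst ℝ ℝ ℝ + (C * exp (-β * max t 0)) • ContinuousLinearMap.snd ℝ ℝ ℝ).prod
    (C • ContinuousLinearMap.fst ℝ ℝ ℝ + (C * exp (-β * max t 0)) • ContinuousLinearMap.snd ℝ ℝ ℝ)

theorem vectorField_apply (t : ℝ) (x : ℝ × ℝ) :
    vectorField C β t x =
      (-x.1 + C * x.2 * exp (-β * max t 0), C * (x.1 + x.2 * exp (-β * max t 0))) := by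
  ext <;>
  simp only [vectorField, ContinuousLinearMap.prod_apply, add_apply, neg_apply, smul_apply,
    ContinuousLinearMap.coe_fst', ContinuousLinearMap.coe_snd', smul_eq_mul] <;>
  ring

theorem vectorField_apply_of_nonneg {t : ℝ} (ht : 0 ≤ t) (x : ℝ × ℝ) :
    vectorField C β t x = (-x.1 + C * x.2 * exp (-β * t), C * (x.1 + x.2 * exp (-β * t))) := by
  rw [vectorField_apply, max_eq_left ht]

theorem continuous_vectorField_apply (x : ℝ × ℝ) : Continuous fun t => vectorField C β t x := by
  simp only [vectorField_apply]
  fun_prop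

theorem nnnorm_vectorField_le (hβ : 0 ≤ β) (t : ℝ) :
    ‖vectorField C β t‖₊ ≤ 1 + 2 * ‖C‖₊ := by
  set c := C * exp (-β * max t 0)
  have hc : ‖c‖ ≤ ‖C‖ := by
    rw [norm_mul, Real.norm_of_nonneg (exp_pos _).le]
    refine mul_le_of_le_one_right (norm_nonneg _) (exp_le_one_iff.2 ?_)
    nlinarith [le_max_right t 0]
  have hfst := ContinuousLinearMap.norm_fst_le ℝ ℝ ℝ
  have hsnd := ContinuousLinearMap.norm_snd_le ℝ ℝ ℝ
  rw [← NNReal.coe_le_coe, coe_nnnorm, vectorField, ContinuousLinearMap.opNorm_prod,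
    norm_prod_le_iff]
  push_cast
  constructor
  · calc ‖-ContinuousLinearMap.fst ℝ ℝ ℝ + c • ContinuousLinearMap.snd ℝ ℝ ℝ‖
        ≤ ‖ContinuousLinearMap.fst ℝ ℝ ℝ‖ + ‖c‖ * ‖ContinuousLinearMap.snd ℝ ℝ ℝ‖ := by
          exact (norm_add_le _ _).trans_eq (by rw [norm_neg, norm_smul])
      _ ≤ 1 + 2 * ‖C‖ := by nlinarith [norm_nonneg C, norm_nonneg c]
  · calc ‖C • ContinuousLinearMap.fst ℝ ℝ ℝ + c • ContinuousLinearMap.snd ℝ ℝ ℝ‖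
        ≤ ‖C‖ * ‖ContinuousLinearMap.fst ℝ ℝ ℝ‖ + ‖c‖ * ‖ContinuousLinearMap.snd ℝ ℝ ℝ‖ := by
          exact (norm_add_le _ _).trans_eq (by rw [norm_smul, norm_smul])
      _ ≤ 1 + 2 * ‖C‖ := by nlinarith [norm_nonneg C, norm_nonneg c]

theorem isSolution_iff :
    IsSolution C β q ζ ↔
      ∀ τ ≥ 0, HasDerivAt (fun t => (q t, ζ t)) (vectorField C β τ (q τ, ζ τ)) τ := by
  refine forall₂_congr fun τ hτ => ?_
  rw [vectorField_apply_of_nonneg hτ]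
  exact ⟨fun h => h.1.prodMk h.2, fun h => ⟨h.hasFDerivAt.fst, h.hasFDerivAt.snd⟩⟩

theorem exists_isSolution (hβ : 0 ≤ β) (q₀ ζ₀ : ℝ) :
    ∃ q ζ : ℝ → ℝ, q 0 = q₀ ∧ ζ 0 = ζ₀ ∧ IsSolution C β q ζ := by
  obtain ⟨f, hf0, hf⟩ := LinearODE.exists_eq_forall_nonneg_hasDerivAt
    continuous_vectorField_apply (nnnorm_vectorField_le hβ) (q₀, ζ₀)
  exact ⟨fun t => (f t).1, fun t => (f t).2, by simp [hf0], by simp [hf0], isSolution_iff.2 hf⟩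

theorem IsSolution.unique (hβ : 0 ≤ β) {q₁ ζ₁ : ℝ → ℝ} (h : IsSolution C β q ζ)
    (h₁ : IsSolution C β q₁ ζ₁) (hq : q₁ 0 = q 0) (hζ : ζ₁ 0 = ζ 0) :
    ∀ τ ≥ 0, q₁ τ = q τ ∧ ζ₁ τ = ζ τ := fun _ hτ =>
  Prod.ext_iff.1 <| LinearODE.eqOn_Ici_of_hasDerivAt (nnnorm_vectorField_le hβ)
    (isSolution_iff.1 h₁) (isSolution_iff.1 h) (Prod.ext hq hζ) hτ

theorem IsSolution.hasDerivAt_q_mul_exp (h : IsSolution C β q ζ) {τ : ℝ} (hτ : 0 ≤ τ) :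
    HasDerivAt (fun t => q t * exp t) (C * ζ τ * exp ((1 - β) * τ)) τ := by
  refine ((h τ hτ).1.mul (hasDerivAt_exp τ)).congr_deriv ?_
  rw [show (1 - β) * τ = -β * τ + τ by ring, exp_add]
  ring

theorem IsSolution.pos (hC : 0 ≤ C) (h : IsSolution C β q ζ) (hq₀ : 0 < q 0)
    (hζ₀ : 0 < ζ 0) : ∀ τ ≥ 0, 0 < q τ ∧ 0 < ζ τ := by
  refine forall_nonneg_mem_of_isOpen (γ := fun t => (q t, ζ t)) (U := Ioi 0 ×ˢ Ioi 0)
    (isOpen_Ioi.prod isOpen_Ioi)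
    (fun t ht => ((h t ht).1.continuousAt.prodMk (h t ht).2.continuousAt).continuousWithinAt)
    ⟨hq₀, hζ₀⟩ fun T hT hpos => ?_
  have hpos' : ∀ t ∈ interior (Icc 0 T), 0 < q t ∧ 0 < ζ t := fun t ht => by
    rw [interior_Icc] at ht
    exact hpos t ⟨ht.1.le, ht.2⟩
  have hqT : q 0 * exp 0 ≤ q T * exp T :=
    monotoneOn_of_hasDerivAt_nonneg (convex_Icc 0 T) (fun t ht => h.hasDerivAt_q_mul_exp ht.1)
      (fun t ht => by obtain ⟨_, _⟩ := hpos' t ht; positivity)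
      (left_mem_Icc.2 hT.le) (right_mem_Icc.2 hT.le) hT.le
  have hζT : ζ 0 ≤ ζ T :=
    monotoneOn_of_hasDerivAt_nonneg (convex_Icc 0 T) (fun t ht => (h t ht.1).2)
      (fun t ht => by obtain ⟨_, _⟩ := hpos' t ht; positivity)
      (left_mem_Icc.2 hT.le) (right_mem_Icc.2 hT.le) hT.le
  rw [exp_zero, mul_one] at hqT
  exact ⟨pos_of_mul_pos_left (hq₀.trans_le hqT) (exp_pos T).le, hζ₀.trans_le hζT⟩

theorem IsSolution.monotoneOn_zeta (hC : 0 ≤ C) (h : IsSolution C β q ζ)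
    (hpos : ∀ τ ≥ 0, 0 < q τ ∧ 0 < ζ τ) : MonotoneOn ζ (Ici 0) :=
  monotoneOn_of_hasDerivAt_nonneg (convex_Ici 0) (fun t ht => (h t ht).2) fun t ht => by
    rw [interior_Ici] at ht
    obtain ⟨_, _⟩ := hpos t ht.le
    positivity

theorem IsSolution.zeta_le (hC : 0 ≤ C) (hβ : 0 < β) (h : IsSolution C β q ζ)
    (hpos : ∀ τ ≥ 0, 0 < q τ ∧ 0 < ζ τ) :
    ∀ τ ≥ 0, ζ τ ≤ (ζ 0 + C * q 0) * exp (C * (1 + C) / β) := by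
  intro τ hτ
  set c := C * (1 + C) / β
  have hcβ : c * β = C * (1 + C) := div_mul_cancel₀ _ hβ.ne'
  set Φ : ℝ → ℝ := fun s => c * (1 - exp (-β * s))
  have hΦ : ∀ s, HasDerivAt Φ (C * (1 + C) * exp (-β * s)) s := fun s => by
    refine ((((hasDerivAt_id s).const_mul (-β)).exp.const_sub 1).const_mul c).congr_deriv ?_
    simp only [id]
    linear_combination exp (-β * s) * hcβ
  have hD : ∀ s ≥ 0, HasDerivAt (fun s => (ζ s + C * q s) * exp (-Φ s))
      (-(C ^ 2 * (1 + C) * exp (-β * s) * q s * exp (-Φ s))) s := fun s hs => by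
    refine (((h s hs).2.add ((h s hs).1.const_mul C)).mul (hΦ s).neg.exp).congr_deriv ?_
    simp only [Pi.add_apply, Pi.neg_apply]
    ring
  have hDτ := antitoneOn_of_hasDerivAt_nonpos (convex_Icc 0 τ) (fun s hs => hD s hs.1)
    (fun s hs => by
      obtain ⟨_, -⟩ := hpos s (interior_subset hs).1
      have : 0 ≤ C ^ 2 * (1 + C) * exp (-β * s) * q s * exp (-Φ s) := by positivity
      linarith)
    (left_mem_Icc.2 hτ) (right_mem_Icc.2 hτ) hτ
  have hD0 : (ζ 0 + C * q 0) * exp (-Φ 0) = ζ 0 + C * q 0 := by simp [Φ]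
  have hΦc : Φ τ ≤ c := mul_le_of_le_one_right (by positivity) (by linarith [exp_pos (-β * τ)])
  obtain ⟨hqτ, -⟩ := hpos τ hτ
  obtain ⟨hq0, hζ0⟩ := hpos 0 le_rfl
  calc ζ τ ≤ (ζ τ + C * q τ) * exp (-Φ τ) * exp (Φ τ) := by
        rw [mul_assoc, ← exp_add, neg_add_cancel, exp_zero, mul_one]
        nlinarith
    _ ≤ (ζ 0 + C * q 0) * exp c := by
        rw [← hD0]
        exact mul_le_mul hDτ (exp_le_exp.2 hΦc) (exp_pos _).le (by positivity)

theorem IsSolution.q_le_mul_exp (hC : 0 ≤ C) (hβ : β < 1) (h : IsSolution C β q ζ)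
    (hpos : ∀ τ ≥ 0, 0 < q τ ∧ 0 < ζ τ) {M : ℝ} (hM : ∀ τ ≥ 0, ζ τ ≤ M) :
    ∀ τ ≥ 0, q τ ≤ (q 0 + C * M / (1 - β)) * exp (-β * τ) := by
  intro τ hτ
  set a := C * M / (1 - β)
  have ha' : a * (1 - β) = C * M := div_mul_cancel₀ _ (by linarith)
  have hW : ∀ s ≥ 0, HasDerivAt (fun s => q s * exp s - a * exp ((1 - β) * s))
      (C * (ζ s - M) * exp ((1 - β) * s)) s := fun s hs => by
    refine ((h.hasDerivAt_q_mul_exp hs).sub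
      (((hasDerivAt_id s).const_mul (1 - β)).exp.const_mul a)).congr_deriv ?_
    simp only [id]
    linear_combination (-exp ((1 - β) * s)) * ha'
  have hWτ := antitoneOn_of_hasDerivAt_nonpos (convex_Icc 0 τ) (fun s hs => hW s hs.1)
    (fun s hs => mul_nonpos_of_nonpos_of_nonneg
      (mul_nonpos_of_nonneg_of_nonpos hC (by linarith [hM s (interior_subset hs).1]))
      (exp_pos _).le)
    (left_mem_Icc.2 hτ) (right_mem_Icc.2 hτ) hτ
  simp only [mul_zero, exp_zero, mul_one] at hWτ
  obtain ⟨hq0, hζ0⟩ := hpos 0 le_rfl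
  have ha : 0 ≤ a := div_nonneg (mul_nonneg hC (hζ0.le.trans (hM 0 le_rfl))) (by linarith)
  have hE : 1 ≤ exp ((1 - β) * τ) := one_le_exp (mul_nonneg (by linarith) hτ)
  calc q τ = q τ * exp τ * exp (-τ) := by
        rw [mul_assoc, ← exp_add, add_neg_cancel, exp_zero, mul_one]
    _ ≤ (q 0 + a) * exp ((1 - β) * τ) * exp (-τ) :=
        mul_le_mul_of_nonneg_right (by nlinarith) (exp_pos _).le
    _ = (q 0 + a) * exp (-β * τ) := by rw [mul_assoc, ← exp_add]; ring_nf

end CoupledSystem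

theorem stmt_13
    (C β q₀ ζ₀ : ℝ) (hC : 0 < C) (hβ : β ∈ Set.Ioo (0:ℝ) (1/2))
    (hq₀ : 0 < q₀) (hζ₀ : 0 < ζ₀) :
    ∃ q ζ : ℝ → ℝ,
      q 0 = q₀ ∧ ζ 0 = ζ₀ ∧
      (∀ τ ≥ (0:ℝ), HasDerivAt q (-q τ + C * ζ τ * Real.exp (-β * τ)) τ ∧
        HasDerivAt ζ (C * (q τ + ζ τ * Real.exp (-β * τ))) τ) ∧
      (∀ q₁ ζ₁ : ℝ → ℝ, q₁ 0 = q₀ → ζ₁ 0 = ζ₀ →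
        (∀ τ ≥ (0:ℝ), HasDerivAt q₁ (-q₁ τ + C * ζ₁ τ * Real.exp (-β * τ)) τ ∧
          HasDerivAt ζ₁ (C * (q₁ τ + ζ₁ τ * Real.exp (-β * τ))) τ) →
        ∀ τ ≥ (0:ℝ), q₁ τ = q τ ∧ ζ₁ τ = ζ τ) ∧
      (∀ τ ≥ (0:ℝ), 0 < q τ ∧ 0 < ζ τ) ∧
      MonotoneOn ζ (Set.Ici 0) ∧
      (∃ M : ℝ, ∀ τ ≥ (0:ℝ), ζ τ ≤ M) ∧
      (∃ K > (0:ℝ), ∃ μ > (0:ℝ), ∀ τ ≥ (0:ℝ), q τ ≤ K * Real.exp (-μ * τ)) := by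
  obtain ⟨hβ₀, hβ₂⟩ := hβ
  obtain ⟨q, ζ, rfl, rfl, hsol⟩ := CoupledSystem.exists_isSolution (C := C) hβ₀.le q₀ ζ₀
  have hpos := hsol.pos hC.le hq₀ hζ₀
  have hbound := hsol.zeta_le hC.le hβ₀ hpos
  refine ⟨q, ζ, rfl, rfl, hsol,
    fun q₁ ζ₁ hq₁ hζ₁ hsol₁ => hsol.unique hβ₀.le hsol₁ hq₁ hζ₁, hpos,
    hsol.monotoneOn_zeta hC.le hpos, ⟨_, hbound⟩,
    ⟨_, ?_, β, hβ₀, hsol.q_le_mul_exp hC.le (by linarith) hpos hbound⟩⟩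
  have : 0 < 1 - β := by linarith
  positivity
end
end

section
/- If φ : [0,∞) → ℝ is continuous, twice continuously differentiable on (0,∞), satisfies φ''(ξ) + (ξ/2) φ'(ξ) + φ(ξ) = 0 for all ξ > 0, φ(0) = 0 and lim_{ξ→+∞} φ(ξ) = 0, then there exists c ∈ ℝ such that φ(ξ) = c · ξ e^{−ξ²/4} for all ξ ≥ 0. -/
open Real Set Filter Topology

/-!
Multiplying the Wronskian of `φ` with `φ₀ = ξ e^{-ξ²/4}` by the Abel factor `e^{ξ²/4}` gives
`W = φ (1 - ξ²/2) - ξ φ'`, which is a constant `K` for every solution. Then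
`g = (φ e^{ξ²/4} - K) / ξ` has derivative `K (1 - e^{ξ²/4}) / ξ²`, which is bounded near `0`;
hence `ξ g(ξ) → 0`, i.e. `φ(ξ) e^{ξ²/4} → K` as `ξ → 0⁺`, and `φ(0) = 0` forces `K = 0`.
Then `g = φ / φ₀` has zero derivative, so it is a constant `c`.
-/

lemma exists_eq_const_of_hasDerivAt_zero {f : ℝ → ℝ} {a : ℝ} (hf : ∀ x > a, HasDerivAt f 0 x) :
    ∃ c, ∀ x > a, f x = c :=
  isOpen_Ioi.exists_is_const_of_deriv_eq_zero isPreconnected_Ioi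
    (fun x hx => (hf x hx).differentiableAt.differentiableWithinAt) fun x hx => (hf x hx).deriv

lemma tendsto_mul_nhdsGT_zero_of_abs_deriv_le {f f' : ℝ → ℝ} {C : ℝ}
    (hf : ∀ x ∈ Ioc (0 : ℝ) 1, HasDerivAt f (f' x) x) (hC : ∀ x ∈ Ioc (0 : ℝ) 1, |f' x| ≤ C) :
    Tendsto (fun x => x * f x) (𝓝[>] 0) (𝓝 0) := by
  have hbound : ∀ x ∈ Ioc (0 : ℝ) 1, |f x| ≤ |f 1| + C := by
    intro x hx
    have hlip := (convex_Ioc (0 : ℝ) 1).norm_image_sub_le_of_norm_hasDerivWithin_le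
      (fun y hy => (hf y hy).hasDerivWithinAt) hC ⟨one_pos, le_rfl⟩ hx
    have hdist : |x - 1| ≤ 1 := by rw [abs_le]; constructor <;> linarith [hx.1, hx.2]
    have hC0 : 0 ≤ C := (abs_nonneg _).trans (hC 1 ⟨one_pos, le_rfl⟩)
    simp only [Real.norm_eq_abs] at hlip
    calc |f x| ≤ |f 1| + |f x - f 1| := by linarith [abs_sub_abs_le_abs_sub (f x) (f 1)]
      _ ≤ |f 1| + C * |x - 1| := by gcongr
      _ ≤ |f 1| + C := by gcongr; exact mul_le_of_le_one_right hC0 hdist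
  refine Tendsto.zero_mul_isBoundedUnder_le (tendsto_nhdsWithin_of_tendsto_nhds tendsto_id) ?_
  exact ⟨|f 1| + C, eventually_map.2 <| mem_of_superset (Ioc_mem_nhdsGT one_pos) hbound⟩

lemma abs_one_sub_exp_div_sq_le {x : ℝ} (hx0 : 0 < x) (hx1 : x ≤ 1) :
    |(1 - exp (x ^ 2 / 4)) / x ^ 2| ≤ 1 / 2 := by
  have hx2 : 0 < x ^ 2 := by positivity
  have ht : |x ^ 2 / 4| ≤ 1 := by
    rw [abs_of_pos (by positivity)]; nlinarith
  have hexp := abs_exp_sub_one_le ht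
  rw [abs_sub_comm, abs_of_pos (by positivity : 0 < x ^ 2 / 4)] at hexp
  rw [abs_div, abs_of_pos hx2, div_le_iff₀ hx2]
  linarith

/-- `e^{ξ²/4}` times the Wronskian `φ φ₀' - φ' φ₀` of `φ` with `φ₀ ξ = ξ e^{-ξ²/4}`. -/
noncomputable def selfSimilarWronskian (φ : ℝ → ℝ) (ξ : ℝ) : ℝ :=
  φ ξ * (1 - ξ ^ 2 / 2) - ξ * deriv φ ξ

section SelfSimilar

variable {φ : ℝ → ℝ} {K : ℝ}

lemma exists_selfSimilarWronskian_eq (hφ : ContDiffOn ℝ 2 φ (Ioi 0))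
    (hode : ∀ ξ > (0 : ℝ), deriv (deriv φ) ξ + (ξ / 2) * deriv φ ξ + φ ξ = 0) :
    ∃ K, ∀ ξ > 0, selfSimilarWronskian φ ξ = K := by
  refine exists_eq_const_of_hasDerivAt_zero fun ξ hξ => ?_
  have hφ' : HasDerivAt φ (deriv φ ξ) ξ :=
    ((hφ.differentiableOn (by norm_num)).differentiableAt (Ioi_mem_nhds hξ)).hasDerivAt
  have hφ'' : HasDerivAt (deriv φ) (deriv (deriv φ) ξ) ξ :=
    (((hφ.deriv_of_isOpen isOpen_Ioi (m := 1) (by norm_num)).differentiableOn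
      (by norm_num)).differentiableAt (Ioi_mem_nhds hξ)).hasDerivAt
  have hpoly : HasDerivAt (fun x : ℝ => 1 - x ^ 2 / 2) (-ξ) ξ := by
    simpa using ((hasDerivAt_pow 2 ξ).div_const 2).const_sub 1
  refine ((hφ'.mul hpoly).sub ((hasDerivAt_id' ξ).mul hφ'')).congr_deriv ?_
  linear_combination -ξ * hode ξ hξ

lemma hasDerivAt_selfSimilarRatio {ξ : ℝ} (hξ : 0 < ξ) (hφ : HasDerivAt φ (deriv φ ξ) ξ)
    (hW : selfSimilarWronskian φ ξ = K) :
    HasDerivAt (fun x => (φ x * exp (x ^ 2 / 4) - K) / x)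
      (K * ((1 - exp (ξ ^ 2 / 4)) / ξ ^ 2)) ξ := by
  have hexp : HasDerivAt (fun x : ℝ => exp (x ^ 2 / 4)) (exp (ξ ^ 2 / 4) * (ξ / 2)) ξ := by
    have hsq : HasDerivAt (fun x : ℝ => x ^ 2 / 4) (ξ / 2) ξ := by
      refine ((hasDerivAt_pow 2 ξ).div_const 4).congr_deriv ?_
      norm_num
      ring
    exact hsq.exp
  refine (((hφ.mul hexp).sub_const K).div (hasDerivAt_id' ξ) hξ.ne').congr_deriv ?_
  rw [← hW, selfSimilarWronskian, Pi.mul_apply]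
  field_simp
  ring

lemma selfSimilarWronskian_eq_zero (hφ : ∀ ξ > 0, HasDerivAt φ (deriv φ ξ) ξ)
    (hW : ∀ ξ > 0, selfSimilarWronskian φ ξ = K) (h0 : Tendsto φ (𝓝[>] 0) (𝓝 0)) : K = 0 := by
  set g : ℝ → ℝ := fun x => (φ x * exp (x ^ 2 / 4) - K) / x
  have hg : Tendsto (fun x => x * g x) (𝓝[>] 0) (𝓝 0) :=
    tendsto_mul_nhdsGT_zero_of_abs_deriv_le (C := |K| * (1 / 2))
      (fun x hx => hasDerivAt_selfSimilarRatio hx.1 (hφ x hx.1) (hW x hx.1))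
      fun x hx => by
        rw [abs_mul]
        exact mul_le_mul_of_nonneg_left (abs_one_sub_exp_div_sq_le hx.1 hx.2) (abs_nonneg K)
  have hK : Tendsto (fun x => φ x * exp (x ^ 2 / 4)) (𝓝[>] 0) (𝓝 K) := by
    have hsum := hg.const_add K
    rw [add_zero] at hsum
    refine hsum.congr' (eventually_nhdsWithin_of_forall fun x hx => ?_)
    simp only [g]
    field_simp [(show (0 : ℝ) < x from hx).ne']
    ring
  have h0' : Tendsto (fun x => φ x * exp (x ^ 2 / 4)) (𝓝[>] 0) (𝓝 0) := by
    have hexp : Tendsto (fun x : ℝ => exp (x ^ 2 / 4)) (𝓝[>] 0) (𝓝 1) := by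
      refine tendsto_nhdsWithin_of_tendsto_nhds ?_
      simpa using (((continuous_pow 2).div_const 4).rexp.tendsto 0)
    simpa using h0.mul hexp
  exact tendsto_nhds_unique hK h0'

lemma exists_eq_mul_of_selfSimilarWronskian_eq_zero (hφ : ∀ ξ > 0, HasDerivAt φ (deriv φ ξ) ξ)
    (hW : ∀ ξ > 0, selfSimilarWronskian φ ξ = 0) :
    ∃ c, ∀ ξ > 0, φ ξ = c * (ξ * exp (-ξ ^ 2 / 4)) := by
  obtain ⟨c, hc⟩ := exists_eq_const_of_hasDerivAt_zero fun ξ hξ => by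
    simpa using hasDerivAt_selfSimilarRatio hξ (hφ ξ hξ) (hW ξ hξ)
  refine ⟨c, fun ξ hξ => ?_⟩
  have hcξ := hc ξ hξ
  rw [div_eq_iff hξ.ne'] at hcξ
  rw [neg_div, exp_neg]
  field_simp
  linear_combination hcξ

end SelfSimilar

theorem stmt_14_general
    (φ : ℝ → ℝ)
    (hc : ContinuousOn φ (Set.Ici 0))
    (hsm : ContDiffOn ℝ 2 φ (Set.Ioi 0))
    (hode : ∀ ξ > (0:ℝ), deriv (deriv φ) ξ + (ξ / 2) * deriv φ ξ + φ ξ = 0)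
    (h0 : φ 0 = 0) :
    ∃ c : ℝ, ∀ ξ ≥ (0:ℝ), φ ξ = c * (ξ * Real.exp (-ξ^2/4)) := by
  have hφ : ∀ ξ > 0, HasDerivAt φ (deriv φ ξ) ξ := fun ξ hξ =>
    ((hsm.differentiableOn (by norm_num)).differentiableAt (Ioi_mem_nhds hξ)).hasDerivAt
  have hφ0 : Tendsto φ (𝓝[>] 0) (𝓝 0) := by
    simpa [h0] using (hc 0 self_mem_Ici).tendsto.mono_left (nhdsWithin_mono _ Ioi_subset_Ici_self)
  obtain ⟨K, hW⟩ := exists_selfSimilarWronskian_eq hsm hode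
  obtain rfl := selfSimilarWronskian_eq_zero hφ hW hφ0
  obtain ⟨c, hφc⟩ := exists_eq_mul_of_selfSimilarWronskian_eq_zero hφ hW
  refine ⟨c, fun ξ hξ => ?_⟩
  rcases hξ.eq_or_lt with rfl | hξ
  · simp [h0]
  · exact hφc ξ hξ

theorem stmt_14
    (φ : ℝ → ℝ)
    (hc : ContinuousOn φ (Set.Ici 0))
    (hsm : ContDiffOn ℝ 2 φ (Set.Ioi 0))
    (hode : ∀ ξ > (0:ℝ), deriv (deriv φ) ξ + (ξ / 2) * deriv φ ξ + φ ξ = 0)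
    (h0 : φ 0 = 0)
    (hlim : Filter.Tendsto φ Filter.atTop (nhds 0)) :
    ∃ c : ℝ, ∀ ξ ≥ (0:ℝ), φ ξ = c * (ξ * Real.exp (-ξ^2/4)) :=
  stmt_14_general φ hc hsm hode h0
end
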